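/- arXiv:1604.00456 — 2 statements merged into one kernel-verified Lean document; each statement's English description precedes it below -/
import Mathlib

section
/- Suppose C is a bounded convex subset of ℝⁿ and P₁, …, P_k are planks in directions v₁, …, v_k with widths w₁, …, w_k whose union covers C. Suppose C \ P₁ is convex, and suppose that the affine plank inequality ∑_{i=2}^{k} wᵢ / w_{vᵢ}(C \ P₁) ≥ 1 holds for the convex set C \ P₁ (with the convention that a term with zero denominator is +∞, and the empty sum over a nonempty covered set being interpreted appropriately). Then ∑_{i=1}^{k} wᵢ / w_{vᵢ}(C) ≥ 1. -/
/-!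
Write `W = width C v₁` and `w = w₁`. If `W ≤ w` the first term of the sum is already `≥ 1`.
Otherwise `C \ P₁` is a nonempty convex set avoiding the plank, so it lies strictly on one side
of it, say it is the cap `C ∩ {⟪x, v₁⟫ > b}` cut off by the hyperplane `⟪x, v₁⟫ = b`. Homotheties
centred at points of `C` near the top of the cap, with ratios up to `(W - w) / W`, map `C` into
this cap, so `width (C \ P₁) u ≥ (1 - w / W) · width C u` in every direction `u`. Hence
`∑ wᵢ / width C vᵢ ≥ w / W + (1 - w / W) · ∑_{i ≥ 2} wᵢ / width (C \ P₁) vᵢ ≥ 1`.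
-/

noncomputable def width {n : ℕ} (K : Set (EuclideanSpace ℝ (Fin n)))
    (v : EuclideanSpace ℝ (Fin n)) : ℝ :=
  sSup ((fun x => (inner ℝ x v : ℝ)) '' K) - sInf ((fun x => (inner ℝ x v : ℝ)) '' K)

open Bornology

def plank {E : Type*} [NormedAddCommGroup E] [InnerProductSpace ℝ E] (v : E) (a w : ℝ) : Set E :=
  {x | a ≤ (inner ℝ x v : ℝ) ∧ (inner ℝ x v : ℝ) ≤ a + w}

section Plank

variable {E : Type*} [NormedAddCommGroup E] [InnerProductSpace ℝ E] {v : E} {a w : ℝ}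

theorem plank_neg (v : E) (a w : ℝ) : plank (-v) (-(a + w)) w = plank v a w := by
  ext x
  simp only [plank, Set.mem_ofPred_eq, inner_neg_right]
  constructor <;> rintro ⟨h₁, h₂⟩ <;> constructor <;> linarith

theorem Convex.forall_gt_or_forall_lt_of_disjoint_plank {S : Set E} (hS : Convex ℝ S)
    (hw : 0 ≤ w) (hdisj : Disjoint S (plank v a w)) :
    (∀ x ∈ S, a + w < inner ℝ x v) ∨ (∀ x ∈ S, inner ℝ x v < a) := by
  have hout : ∀ x ∈ S, ¬(a ≤ inner ℝ x v ∧ inner ℝ x v ≤ a + w) :=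
    fun x hx hxP => Set.disjoint_left.1 hdisj hx hxP
  by_contra! h
  obtain ⟨⟨x, hx, hxle⟩, ⟨y, hy, hyge⟩⟩ := h
  have hxa : inner ℝ x v < a := by by_contra! h; exact hout x hx ⟨h, hxle⟩
  have hyb : a + w < inner ℝ y v := by by_contra! h; exact hout y hy ⟨hyge, h⟩
  have hlin : IsLinearMap ℝ fun x : E => (inner ℝ x v : ℝ) :=
    ⟨fun x y => inner_add_left x y v, fun c x => real_inner_smul_left x v c⟩
  obtain ⟨z, hz, hza⟩ : a ∈ (fun x : E => (inner ℝ x v : ℝ)) '' S :=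
    (hS.is_linear_image hlin).ordConnected.out ⟨x, hx, rfl⟩ ⟨y, hy, rfl⟩ ⟨hxa.le, by linarith⟩
  exact hout z hz ⟨hza.ge, by linarith [hza]⟩

end Plank

section Width

variable {n : ℕ} {C K L : Set (EuclideanSpace ℝ (Fin n))} {u v : EuclideanSpace ℝ (Fin n)}

theorem isBounded_image_inner (hK : IsBounded K) (u : EuclideanSpace ℝ (Fin n)) :
    IsBounded ((fun x => (inner ℝ x u : ℝ)) '' K) := by
  have h := (innerSL ℝ u).lipschitz.isBounded_image hK
  rwa [show ⇑(innerSL ℝ u) = fun x => (inner ℝ x u : ℝ) from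
    funext fun x => (innerSL_apply_apply ℝ u x).trans (real_inner_comm x u)] at h

theorem inner_sub_le_width (hK : IsBounded K) {x y : EuclideanSpace ℝ (Fin n)}
    (hx : x ∈ K) (hy : y ∈ K) : inner ℝ (x - y) u ≤ width K u := by
  have hsup := le_csSup (isBounded_image_inner hK u).bddAbove ⟨x, hx, rfl⟩
  have hinf := csInf_le (isBounded_image_inner hK u).bddBelow ⟨y, hy, rfl⟩
  rw [inner_sub_left]
  unfold width
  linarith

theorem width_nonneg (hK : IsBounded K) : 0 ≤ width K u := by
  rcases K.eq_empty_or_nonempty with rfl | ⟨x, hx⟩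
  · simp [width]
  · simpa using inner_sub_le_width (u := u) hK hx hx

theorem width_le_of_forall_inner_sub_le (hK : K.Nonempty) {d : ℝ}
    (h : ∀ x ∈ K, ∀ y ∈ K, inner ℝ (x - y) u ≤ d) : width K u ≤ d := by
  have hsup : ∀ y ∈ K, sSup ((fun x => (inner ℝ x u : ℝ)) '' K) ≤ d + inner ℝ y u :=
    fun y hy => csSup_le (hK.image _) <| by
      rintro _ ⟨x, hx, rfl⟩
      have hxy := h x hx y hy
      rw [inner_sub_left] at hxy
      linarith
  have hinf : sSup ((fun x => (inner ℝ x u : ℝ)) '' K) - d ≤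
      sInf ((fun x => (inner ℝ x u : ℝ)) '' K) :=
    le_csInf (hK.image _) <| by
      rintro _ ⟨y, hy, rfl⟩
      linarith [hsup y hy]
  unfold width
  linarith

theorem width_neg (K : Set (EuclideanSpace ℝ (Fin n))) (v : EuclideanSpace ℝ (Fin n)) :
    width K (-v) = width K v := by
  have himage : (fun x => (inner ℝ x (-v) : ℝ)) '' K = -((fun x => (inner ℝ x v : ℝ)) '' K) := by
    rw [← Set.image_neg_eq_neg, ← Set.image_comp]
    simp [inner_neg_right]
  simp only [width, himage, Real.sInf_def, neg_neg]
  ring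

theorem mul_width_le_width_of_homothety_mem (hL : IsBounded L) (hK : K.Nonempty)
    (z : EuclideanSpace ℝ (Fin n)) {t : ℝ} (ht : 0 ≤ t) (hKL : ∀ x ∈ K, z + t • (x - z) ∈ L) :
    t * width K u ≤ width L u := by
  rcases ht.eq_or_lt with rfl | ht
  · simpa using width_nonneg hL
  rw [← le_div_iff₀' ht]
  refine width_le_of_forall_inner_sub_le hK fun x hx y hy => ?_
  rw [le_div_iff₀' ht]
  calc t * inner ℝ (x - y) u = inner ℝ ((z + t • (x - z)) - (z + t • (y - z))) u := by
        simp only [inner_sub_left, inner_add_left, real_inner_smul_left]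
        ring
    _ ≤ width L u := inner_sub_le_width hL (hKL x hx) (hKL y hy)

theorem mul_width_le_width_inter_of_lt (hb : IsBounded C) (hc : Convex ℝ C)
    (u : EuclideanSpace ℝ (Fin n)) {b t : ℝ} (ht₀ : 0 ≤ t) (ht₁ : t ≤ 1)
    {z : EuclideanSpace ℝ (Fin n)} (hz : z ∈ C) (hbz : b < (1 - t) * inner ℝ z v + t * sInf ((fun x => (inner ℝ x v : ℝ)) '' C)) :
    t * width C u ≤ width (C ∩ {x | b < inner ℝ x v}) u := by
  refine mul_width_le_width_of_homothety_mem (hb.subset Set.inter_subset_left) ⟨z, hz⟩ z ht₀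
    fun x hx => ⟨hc.add_smul_sub_mem hz hx ⟨ht₀, ht₁⟩, ?_⟩
  have hx_ge := csInf_le (isBounded_image_inner hb v).bddBelow ⟨x, hx, rfl⟩
  have hx_eq : inner ℝ (z + t • (x - z)) v = (1 - t) * inner ℝ z v + t * inner ℝ x v := by
    simp only [inner_add_left, inner_sub_left, real_inner_smul_left]
    ring
  show b < inner ℝ (z + t • (x - z)) v
  nlinarith

theorem sub_mul_width_le_mul_width_inter (hb : IsBounded C) (hc : Convex ℝ C)
    (u : EuclideanSpace ℝ (Fin n)) {b : ℝ} (hbC : sInf ((fun x => (inner ℝ x v : ℝ)) '' C) ≤ b) :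
    (sSup ((fun x => (inner ℝ x v : ℝ)) '' C) - b) * width C u ≤
      width C v * width (C ∩ {x | b < inner ℝ x v}) u := by
  set f : EuclideanSpace ℝ (Fin n) → ℝ := fun x => inner ℝ x v
  set M := sSup (f '' C)
  set m := sInf (f '' C)
  have hcap : IsBounded (C ∩ {x | b < f x}) := hb.subset Set.inter_subset_left
  rcases le_or_gt M b with hMb | hbM
  · exact (mul_nonpos_of_nonpos_of_nonneg (by linarith) (width_nonneg hb)).trans
      (mul_nonneg (width_nonneg hb) (width_nonneg hcap))
  have hne : C.Nonempty := by
    by_contra! hC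
    simp [M, m, hC] at hbM hbC
    linarith
  have hMm : 0 < M - m := by linarith
  have hratio : ∀ t < (M - b) / (M - m), t * width C u ≤ width (C ∩ {x | b < f x}) u := by
    intro t ht
    rcases lt_or_ge t 0 with ht₀ | ht₀
    · exact (mul_nonpos_of_nonpos_of_nonneg ht₀.le (width_nonneg hb)).trans (width_nonneg hcap)
    have ht₁ : t < 1 := ht.trans_le ((div_le_one hMm).2 (by linarith))
    have hthreshold : (b - t * m) / (1 - t) < M := by
      rw [div_lt_iff₀ (by linarith)]
      rw [lt_div_iff₀ hMm] at ht
      linarith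
    obtain ⟨_, ⟨z, hz, rfl⟩, hbz⟩ := exists_lt_of_lt_csSup (hne.image f) hthreshold
    rw [div_lt_iff₀ (by linarith)] at hbz
    exact mul_width_le_width_inter_of_lt hb hc u ht₀ ht₁.le hz (by linarith)
  have hlim : (M - b) / (M - m) * width C u ≤ width (C ∩ {x | b < f x}) u :=
    le_of_tendsto (x := nhdsWithin ((M - b) / (M - m)) (Set.Iio _))
      (((continuous_id.mul continuous_const).tendsto _).mono_left nhdsWithin_le_nhds)
      (eventually_nhdsWithin_of_forall fun t ht => hratio t ht)
  calc (M - b) * width C u = (M - m) * ((M - b) / (M - m) * width C u) := by field_simp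
    _ ≤ (M - m) * width (C ∩ {x | b < f x}) u := mul_le_mul_of_nonneg_left hlim hMm.le

theorem width_sub_mul_width_le_of_forall_gt (hb : IsBounded C) (hc : Convex ℝ C) {a w : ℝ}
    (hw : 0 ≤ w) (u : EuclideanSpace ℝ (Fin n))
    (habove : ∀ x ∈ C \ plank v a w, a + w < inner ℝ x v) :
    (width C v - w) * width C u ≤ width C v * width (C \ plank v a w) u := by
  rcases C.eq_empty_or_nonempty with rfl | hne
  · simp [width]
  have hdiff : C \ plank v a w = C ∩ {x | a + w < inner ℝ x v} := by
    ext x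
    refine ⟨fun hx => ⟨hx.1, habove x hx⟩, fun ⟨hx, hxb⟩ => ⟨hx, fun hxP => ?_⟩⟩
    exact absurd hxP.2 (not_le.2 hxb)
  have haC : a ≤ sInf ((fun x => (inner ℝ x v : ℝ)) '' C) := by
    refine le_csInf (hne.image _) ?_
    rintro _ ⟨x, hx, rfl⟩
    by_cases hxP : x ∈ plank v a w
    · exact hxP.1
    · linarith [habove x ⟨hx, hxP⟩]
  rcases le_or_gt (sInf ((fun x => (inner ℝ x v : ℝ)) '' C)) (a + w) with hle | hlt
  · calc (width C v - w) * width C u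
        ≤ (sSup ((fun x => (inner ℝ x v : ℝ)) '' C) - (a + w)) * width C u := by
          refine mul_le_mul_of_nonneg_right ?_ (width_nonneg hb)
          unfold width
          linarith
      _ ≤ width C v * width (C \ plank v a w) u :=
          hdiff ▸ sub_mul_width_le_mul_width_inter hb hc u hle
  · have hC : C \ plank v a w = C := by
      rw [hdiff, Set.inter_eq_left]
      exact fun x hx => hlt.trans_le (csInf_le (isBounded_image_inner hb v).bddBelow ⟨x, hx, rfl⟩)
    rw [hC]
    exact mul_le_mul_of_nonneg_right (by linarith) (width_nonneg hb)

theorem width_sub_mul_width_le_mul_width_diff_plank (hb : IsBounded C) (hc : Convex ℝ C)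
    {a w : ℝ} (hw : 0 ≤ w) (hconv : Convex ℝ (C \ plank v a w)) (u : EuclideanSpace ℝ (Fin n)) :
    (width C v - w) * width C u ≤ width C v * width (C \ plank v a w) u := by
  rcases hconv.forall_gt_or_forall_lt_of_disjoint_plank hw Set.disjoint_sdiff_left with
    habove | hbelow
  · exact width_sub_mul_width_le_of_forall_gt hb hc hw u habove
  · rw [← plank_neg, ← width_neg C v]
    refine width_sub_mul_width_le_of_forall_gt hb hc hw u fun x hx => ?_
    rw [plank_neg] at hx
    rw [inner_neg_right]
    linarith [hbelow x hx]

end Width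

theorem one_le_sum_div_of_one_le_sum_erase_div {ι : Type*} [DecidableEq ι] {s : Finset ι}
    {i₀ : ι} (hi₀ : i₀ ∈ s) {w W W' : ι → ℝ} (hw : ∀ i, 0 ≤ w i) (hW : ∀ i, 0 < W i)
    (hW' : ∀ i, 0 < W' i) (hlt : w i₀ < W i₀)
    (hscale : ∀ i, (W i₀ - w i₀) * W i ≤ W i₀ * W' i)
    (hrest : 1 ≤ ∑ i ∈ s.erase i₀, w i / W' i) :
    1 ≤ ∑ i ∈ s, w i / W i := by
  set θ := w i₀ / W i₀
  have hθ : θ < 1 := (div_lt_one (hW i₀)).2 hlt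
  have hterm : ∀ i, (1 - θ) * (w i / W' i) ≤ w i / W i := by
    intro i
    have h1θ : 1 - θ = (W i₀ - w i₀) / W i₀ := by rw [sub_div, div_self (hW i₀).ne']
    rw [h1θ, div_mul_div_comm, div_le_div_iff₀ (mul_pos (hW i₀) (hW' i)) (hW i)]
    linarith [mul_le_mul_of_nonneg_left (hscale i) (hw i)]
  calc 1 = θ + (1 - θ) * 1 := by ring
    _ ≤ θ + (1 - θ) * ∑ i ∈ s.erase i₀, w i / W' i := by gcongr
    _ = θ + ∑ i ∈ s.erase i₀, (1 - θ) * (w i / W' i) := by rw [Finset.mul_sum]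
    _ ≤ θ + ∑ i ∈ s.erase i₀, w i / W i := by gcongr with i; exact hterm i
    _ = ∑ i ∈ s, w i / W i := Finset.add_sum_erase s (fun i => w i / W i) hi₀

theorem plank_removal_induction_general {n k : ℕ} (hk : 0 < k)
    (C : Set (EuclideanSpace ℝ (Fin n)))
    (hb : Bornology.IsBounded C) (hc : Convex ℝ C)
    (v : Fin k → EuclideanSpace ℝ (Fin n))
    (a w : Fin k → ℝ) (hw : ∀ i, 0 ≤ w i)
    (P : Fin k → Set (EuclideanSpace ℝ (Fin n)))
    (hP : ∀ i, P i = {x | a i ≤ (inner ℝ x (v i) : ℝ) ∧ (inner ℝ x (v i) : ℝ) ≤ a i + w i})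
    (hconv : Convex ℝ (C \ P ⟨0, hk⟩))
    (hind : (∃ i, i ≠ (⟨0, hk⟩ : Fin k) ∧ width (C \ P ⟨0, hk⟩) (v i) = 0) ∨
      1 ≤ ∑ i ∈ Finset.univ.erase (⟨0, hk⟩ : Fin k), w i / width (C \ P ⟨0, hk⟩) (v i)) :
    (∃ i, width C (v i) = 0) ∨ 1 ≤ ∑ i, w i / width C (v i) := by
  by_cases hzero : ∃ i, width C (v i) = 0
  · exact Or.inl hzero
  push Not at hzero
  right
  set i₀ : Fin k := ⟨0, hk⟩
  have hW : ∀ i, 0 < width C (v i) := fun i => (width_nonneg hb).lt_of_ne' (hzero i)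
  have hP₀ : P i₀ = plank (v i₀) (a i₀) (w i₀) := hP i₀
  rw [hP₀] at hconv hind
  have hscale := width_sub_mul_width_le_mul_width_diff_plank hb hc (hw i₀) hconv
  rcases le_or_gt (width C (v i₀)) (w i₀) with hle | hlt
  · exact ((one_le_div (hW i₀)).2 hle).trans <|
      Finset.single_le_sum (fun i _ => div_nonneg (hw i) (hW i).le) (Finset.mem_univ i₀)
  have hW' : ∀ i, 0 < width (C \ plank (v i₀) (a i₀) (w i₀)) (v i) := fun i =>
    pos_of_mul_pos_right ((mul_pos (sub_pos.2 hlt) (hW i)).trans_le (hscale (v i))) (hW i₀).le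
  rcases hind with ⟨i, -, hi⟩ | hrest
  · exact absurd hi (hW' i).ne'
  · exact one_le_sum_div_of_one_le_sum_erase_div (Finset.mem_univ i₀) hw hW hW' hlt
      (fun i => hscale (v i)) hrest

theorem plank_removal_induction {n k : ℕ} (hk : 0 < k)
    (C : Set (EuclideanSpace ℝ (Fin n)))
    (hb : Bornology.IsBounded C) (hc : Convex ℝ C)
    (v : Fin k → EuclideanSpace ℝ (Fin n)) (hv : ∀ i, ‖v i‖ = 1)
    (a w : Fin k → ℝ) (hw : ∀ i, 0 ≤ w i)
    (P : Fin k → Set (EuclideanSpace ℝ (Fin n)))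
    (hP : ∀ i, P i = {x | a i ≤ (inner ℝ x (v i) : ℝ) ∧ (inner ℝ x (v i) : ℝ) ≤ a i + w i})
    (hcover : C ⊆ ⋃ i, P i)
    (hconv : Convex ℝ (C \ P ⟨0, hk⟩))
    (hind : (∃ i, i ≠ (⟨0, hk⟩ : Fin k) ∧ width (C \ P ⟨0, hk⟩) (v i) = 0) ∨
      1 ≤ ∑ i ∈ Finset.univ.erase (⟨0, hk⟩ : Fin k), w i / width (C \ P ⟨0, hk⟩) (v i)) :
    (∃ i, width C (v i) = 0) ∨ 1 ≤ ∑ i, w i / width C (v i) :=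
  plank_removal_induction_general hk C hb hc v a w hw P hP hconv hind
end

section
/- Let C be a bounded convex subset of ℝⁿ, V a unit vector, and suppose inf_{x∈C} ⟨x,V⟩ = 0 and w_V(C) > 0. Let 0 < s < w_V(C) and X = {x ∈ C : ⟨x,V⟩ ≤ s}. Then for every unit vector v, w_v(X) ≥ (s / w_V(C)) · w_v(C). -/
open Metric AffineMap Set Filter Bornology
open scoped Pointwise RealInnerProductSpace

theorem Metric.diam_image_homothety {𝕜 V P : Type*} [NormedField 𝕜]
    [SeminormedAddCommGroup V] [NormedSpace 𝕜 V] [PseudoMetricSpace P] [NormedAddTorsor V P] (a : P) (c : 𝕜) (S : Set P) :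
    diam (homothety a c '' S) = ‖c‖ * diam S := by
  have : homothety a c '' S =
      IsometryEquiv.vaddConst a '' (c • ((IsometryEquiv.vaddConst a).symm '' S)) := by
    rw [← image_smul, image_image, image_image]; rfl
  rw [this, IsometryEquiv.diam_image, diam_smul₀, IsometryEquiv.diam_image]

section InnerProductSpace

variable {E : Type*} [NormedAddCommGroup E] [InnerProductSpace ℝ E]

theorem image_inner_homothety (K : Set E) (y v : E) (c : ℝ) :
    (fun x => ⟪x, v⟫) '' (homothety y c '' K) =
      homothety ⟪y, v⟫ c '' ((fun x => ⟪x, v⟫) '' K) := by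
  simp only [image_image, homothety_eq_lineMap, lineMap_apply_module,
    inner_add_left, real_inner_smul_left, smul_eq_mul]

theorem homothety_image_subset_sep_inner_le {C : Set E} (hC : Convex ℝ C) {y V : E} {c M s : ℝ}
    (hy : y ∈ C) (hc₀ : 0 ≤ c) (hc₁ : c ≤ 1) (hM : ∀ x ∈ C, ⟪x, V⟫ ≤ M)
    (hs : (1 - c) * ⟪y, V⟫ + c * M ≤ s) :
    homothety y c '' C ⊆ {x ∈ C | ⟪x, V⟫ ≤ s} := by
  rintro _ ⟨x, hx, rfl⟩
  rw [homothety_eq_lineMap]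
  refine ⟨hC.lineMap_mem hy hx ⟨hc₀, hc₁⟩, ?_⟩
  rw [lineMap_apply_module, inner_add_left, real_inner_smul_left, real_inner_smul_left]
  nlinarith [mul_le_mul_of_nonneg_left (hM x hx) hc₀]

end InnerProductSpace

section Width

variable {n : ℕ} {K L : Set (EuclideanSpace ℝ (Fin n))} {v : EuclideanSpace ℝ (Fin n)}

theorem width_eq_diam_image (hK : IsBounded K) : width K v = diam ((fun x => ⟪x, v⟫) '' K) :=
  (Real.diam_eq (hK.image (innerSLFlip ℝ v))).symm

theorem width_mono (hKL : K ⊆ L) (hL : IsBounded L) : width K v ≤ width L v := by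
  rw [width_eq_diam_image (hL.subset hKL), width_eq_diam_image hL]
  exact diam_mono (image_mono hKL) (hL.image (innerSLFlip ℝ v))

theorem width_homothety_image (hK : IsBounded K) (y : EuclideanSpace ℝ (Fin n)) {c : ℝ}
    (hc : 0 ≤ c) : width (homothety y c '' K) v = c * width K v := by
  have hK' : IsBounded (homothety y c '' K) :=
    (hK.isCompact_closure.image (homothety_continuous y c)).isBounded.subset
      (image_mono subset_closure)
  rw [width_eq_diam_image hK', width_eq_diam_image hK,
    image_inner_homothety, diam_image_homothety, Real.norm_of_nonneg hc]

theorem inner_le_sInf_add_width (hK : IsBounded K) {x : EuclideanSpace ℝ (Fin n)} (hx : x ∈ K) :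
    ⟪x, v⟫ ≤ sInf ((fun x => ⟪x, v⟫) '' K) + width K v := by
  rw [width, add_sub_cancel]
  exact le_csSup (hK.image (innerSLFlip ℝ v)).bddAbove (mem_image_of_mem _ hx)

theorem nonempty_of_width_ne_zero (h : width K v ≠ 0) : K.Nonempty :=
  nonempty_iff_ne_empty.2 fun hK => h (by simp [width, hK])

end Width

theorem width_slice_ge_general {n : ℕ} (C : Set (EuclideanSpace ℝ (Fin n)))
    (hb : Bornology.IsBounded C) (hc : Convex ℝ C)
    (V : EuclideanSpace ℝ (Fin n))
    (hinf : sInf ((fun x => (inner ℝ x V : ℝ)) '' C) = 0)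
    (s : ℝ) (hs0 : 0 < s) (hs1 : s < width C V)
    (X : Set (EuclideanSpace ℝ (Fin n)))
    (hXdef : X = {x ∈ C | (inner ℝ x V : ℝ) ≤ s})
    (v : EuclideanSpace ℝ (Fin n)) :
    width X v ≥ (s / width C V) * width C v := by
  set w := width C V
  have hw : 0 < w := hs0.trans hs1
  have hCne : C.Nonempty := nonempty_of_width_ne_zero hw.ne'
  have hle : ∀ x ∈ C, ⟪x, V⟫ ≤ w := fun x hx => by
    simpa only [hinf, zero_add] using inner_le_sInf_add_width (v := V) hb hx
  have hslice : ∀ c ∈ Ioo 0 (s / w), c * width C v ≤ width X v := by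
    rintro c ⟨hc₀, hcs⟩
    have hc₁ : c < 1 := hcs.trans ((div_lt_one hw).2 hs1)
    obtain ⟨_, ⟨y, hy, rfl⟩, hyV⟩ : ∃ t ∈ (fun x => ⟪x, V⟫) '' C, t < (s - c * w) / (1 - c) :=
      exists_lt_of_csInf_lt (hCne.image _) <| hinf ▸
        div_pos (by linarith [(lt_div_iff₀ hw).1 hcs]) (by linarith)
    have hsub : homothety y c '' C ⊆ X := hXdef ▸
      homothety_image_subset_sep_inner_le hc hy hc₀.le hc₁.le hle
        (by linarith [(lt_div_iff₀ (by linarith : (0 : ℝ) < 1 - c)).1 hyV])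
    calc c * width C v = width (homothety y c '' C) v :=
          (width_homothety_image hb y hc₀.le).symm
      _ ≤ width X v := width_mono hsub (hb.subset (hXdef ▸ sep_subset _ _))
  exact le_of_tendsto ((continuous_mul_const _).tendsto _ |>.mono_left nhdsWithin_le_nhds)
    (eventually_of_mem (Ioo_mem_nhdsLT (div_pos hs0 hw)) hslice)

theorem width_slice_ge {n : ℕ} (C : Set (EuclideanSpace ℝ (Fin n)))
    (hb : Bornology.IsBounded C) (hc : Convex ℝ C)
    (V : EuclideanSpace ℝ (Fin n)) (hV : ‖V‖ = 1)
    (hinf : sInf ((fun x => (inner ℝ x V : ℝ)) '' C) = 0)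
    (hwC : 0 < width C V)
    (s : ℝ) (hs0 : 0 < s) (hs1 : s < width C V)
    (X : Set (EuclideanSpace ℝ (Fin n)))
    (hXdef : X = {x ∈ C | (inner ℝ x V : ℝ) ≤ s})
    (v : EuclideanSpace ℝ (Fin n)) (hv : ‖v‖ = 1) :
    width X v ≥ (s / width C V) * width C v :=
  width_slice_ge_general C hb hc V hinf s hs0 hs1 X hXdef v
end
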